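/- arXiv:1906.05154 — 3 statements merged into one kernel-verified Lean document; each statement's English description precedes it below -/
import Mathlib

section
/- Let f : ℝ → ℝ be continuous, non-increasing with f(0)=0, f < 0 on (0,∞), and suppose G(x) = ∫_x^∞ dt/(-f(t)) is finite for all x > 0. Let φ = G⁻¹ : (0,∞) → (0,∞) be the inverse of G. Then φ is differentiable, decreasing, satisfies φ'(x) = f(φ(x)) for all x > 0, and φ(x) → +∞ as x → 0⁺. -/
/-!
Since the integrand `1 / (-f)` is positive and continuous on `(0, ∞)`, `G` is antitone and
positive there, with `G' = 1 / f` by the fundamental theorem of calculus. Its inverse `φ` is then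
strictly antitone with image `(0, ∞)`; a monotone map whose image is an open interval is
continuous, so the inverse function theorem gives `φ' = 1 / G'(φ) = f ∘ φ`, and an antitone map
unbounded on `(0, ∞)` tends to `+∞` at `0⁺`.
-/

open MeasureTheory Set Filter Topology

section IntegralIoi

variable {g : ℝ → ℝ} {a b : ℝ}

theorem hasDerivAt_integral_Ioi (hg : IntegrableOn g (Ioi a)) (hab : a < b)
    (hgb : ContinuousAt g b) : HasDerivAt (fun x => ∫ t in Ioi x, g t) (-g b) b := by
  have hprim : HasDerivAt (fun x => ∫ t in a..x, g t) (g b) b :=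
    intervalIntegral.integral_hasDerivAt_right
      ((intervalIntegrable_iff_integrableOn_Ioc_of_le hab.le).2 (hg.mono_set Ioc_subset_Ioi_self))
      (AEStronglyMeasurable.stronglyMeasurableAtFilter_of_mem hg.aestronglyMeasurable
        (Ioi_mem_nhds hab)) hgb
  have heq : (fun x => ∫ t in Ioi x, g t) =ᶠ[𝓝 b]
      fun x => (∫ t in Ioi a, g t) - ∫ t in a..x, g t := by
    filter_upwards [Ioi_mem_nhds hab] with x hx
    rw [← intervalIntegral.integral_Ioi_sub_Ioi hg hx.le, sub_sub_cancel]
  simpa using ((hasDerivAt_const b _).sub hprim).congr_of_eventuallyEq heq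

theorem integral_Ioi_pos (hg : IntegrableOn g (Ioi a)) (hpos : ∀ t > a, 0 < g t) :
    0 < ∫ t in Ioi a, g t := by
  have hsupp : Function.support g ∩ Ioi a = Ioi a :=
    inter_eq_right.2 fun t ht => (hpos t ht).ne'
  rw [setIntegral_pos_iff_support_of_nonneg_ae
    ((ae_restrict_iff' measurableSet_Ioi).2 (ae_of_all _ fun t ht => (hpos t ht).le)) hg, hsupp]
  simp

theorem antitoneOn_integral_Ioi (hg : ∀ x > a, IntegrableOn g (Ioi x))
    (hnonneg : ∀ t > a, 0 ≤ g t) : AntitoneOn (fun x => ∫ t in Ioi x, g t) (Ioi a) :=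
  fun x hx _ _ hxy => setIntegral_mono_set (hg x hx)
    ((ae_restrict_iff' measurableSet_Ioi).2 (ae_of_all _ fun t ht => hnonneg t (lt_trans hx ht)))
    (Ioi_subset_Ioi hxy).eventuallyLE

end IntegralIoi

section Antitone

variable {α β : Type*} [LinearOrder α] [LinearOrder β] {G : β → α} {φ : α → β} {s : Set α}
  {t : Set β}

theorem strictAntiOn_of_leftInvOn (hG : AntitoneOn G t) (hφ : MapsTo φ s t)
    (hinv : LeftInvOn G φ s) : StrictAntiOn φ s := by
  intro x hx y hy hxy
  by_contra! h
  have := hG (hφ hx) (hφ hy) h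
  rw [hinv hx, hinv hy] at this
  exact this.not_gt hxy

variable [TopologicalSpace α] [OrderTopology α]

theorem AntitoneOn.continuousAt_of_image_mem_nhds [TopologicalSpace β] [OrderTopology β]
    [DenselyOrdered β] {a : α}
    (hφ : AntitoneOn φ s) (hs : s ∈ 𝓝 a) (himg : φ '' s ∈ 𝓝 (φ a)) : ContinuousAt φ a :=
  continuousAt_of_monotoneOn_of_image_mem_nhds (β := βᵒᵈ) hφ hs himg

theorem AntitoneOn.tendsto_nhdsGT_atTop {a : α} (hφ : AntitoneOn φ (Ioi a))
    (hφ_unbdd : ¬BddAbove (φ '' Ioi a)) : Tendsto φ (𝓝[>] a) atTop := by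
  rw [tendsto_atTop]
  intro M
  obtain ⟨_, ⟨x, hx, rfl⟩, hMx⟩ := not_bddAbove_iff.1 hφ_unbdd M
  filter_upwards [Ioo_mem_nhdsGT hx] with y hy
  exact hMx.le.trans (hφ hy.1 hx hy.2.le)

end Antitone

theorem stmt1_general (f : ℝ → ℝ) (hf_cont : Continuous f)
    (hf_neg : ∀ y > 0, f y < 0)
    (hint : ∀ x > 0, IntegrableOn (fun t => 1 / (-f t)) (Ioi x))
    (G : ℝ → ℝ) (hG : ∀ x > 0, G x = ∫ t in Ioi x, 1 / (-f t))
    (φ : ℝ → ℝ) (hφ_pos : ∀ x > 0, 0 < φ x)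
    (hφ_inv : ∀ x > 0, G (φ x) = x) (hinv_φ : ∀ x > 0, φ (G x) = x) :
    (∀ x > 0, HasDerivAt φ (f (φ x)) x) ∧ StrictAntiOn φ (Ioi 0) ∧
      Tendsto φ (𝓝[>] 0) atTop := by
  have hG_eq : EqOn G (fun x => ∫ t in Ioi x, 1 / (-f t)) (Ioi 0) := hG
  have hg_pos : ∀ t > 0, 0 < 1 / -f t := fun t ht => one_div_pos.2 (neg_pos.2 (hf_neg t ht))
  have hG_pos : ∀ x > 0, 0 < G x := fun x hx =>
    hG x hx ▸ integral_Ioi_pos (hint x hx) fun t ht => hg_pos t (hx.trans ht)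
  have hG_anti : AntitoneOn G (Ioi 0) :=
    (antitoneOn_integral_Ioi hint fun t ht => (hg_pos t ht).le).congr hG_eq.symm
  have hG_deriv : ∀ p > 0, HasDerivAt G (f p)⁻¹ p := by
    intro p hp
    have hg_cont : ContinuousAt (fun t => 1 / -f t) p :=
      continuousAt_const.div hf_cont.neg.continuousAt (neg_ne_zero.2 (hf_neg p hp).ne)
    simpa using (hasDerivAt_integral_Ioi (hint (p / 2) (half_pos hp)) (half_lt_self hp)
      hg_cont).congr_of_eventuallyEq (hG_eq.eventuallyEq_of_mem (Ioi_mem_nhds hp))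
  have hφ_maps : MapsTo φ (Ioi 0) (Ioi 0) := hφ_pos
  have hφ_image : φ '' Ioi 0 = Ioi 0 :=
    SurjOn.image_eq_of_mapsTo (fun y hy => ⟨G y, hG_pos y hy, hinv_φ y hy⟩) hφ_maps
  have hφ_anti : StrictAntiOn φ (Ioi 0) := strictAntiOn_of_leftInvOn hG_anti hφ_maps hφ_inv
  refine ⟨fun x hx => ?_, hφ_anti, hφ_anti.antitoneOn.tendsto_nhdsGT_atTop ?_⟩
  · have hφ_cont : ContinuousAt φ x := hφ_anti.antitoneOn.continuousAt_of_image_mem_nhds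
      (Ioi_mem_nhds hx) (by rw [hφ_image]; exact Ioi_mem_nhds (hφ_pos x hx))
    simpa using (hG_deriv _ (hφ_pos x hx)).of_local_left_inverse hφ_cont
      (inv_ne_zero (hf_neg _ (hφ_pos x hx)).ne) (eventually_of_mem (Ioi_mem_nhds hx) hφ_inv)
  · rw [hφ_image]
    exact not_bddAbove_Ioi 0

theorem stmt1 (f : ℝ → ℝ) (hf_cont : Continuous f) (hf_anti : Antitone f)
    (hf0 : f 0 = 0) (hf_neg : ∀ y > 0, f y < 0)
    (hint : ∀ x > 0, IntegrableOn (fun t => 1 / (-f t)) (Ioi x))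
    (G : ℝ → ℝ) (hG : ∀ x > 0, G x = ∫ t in Ioi x, 1 / (-f t))
    (φ : ℝ → ℝ) (hφ_pos : ∀ x > 0, 0 < φ x)
    (hφ_inv : ∀ x > 0, G (φ x) = x) (hinv_φ : ∀ x > 0, φ (G x) = x) :
    (∀ x > 0, HasDerivAt φ (f (φ x)) x) ∧ StrictAntiOn φ (Ioi 0) ∧
      Tendsto φ (𝓝[>] 0) atTop :=
  stmt1_general f hf_cont hf_neg hint G hG φ hφ_pos hφ_inv hinv_φ
end

section
/- Let f be continuous, non-increasing, negative on (0,∞), with G(x) = ∫_x^∞ dt/(-f(t)) < ∞ for all x > 0. Then y/(-f(y)) → 0 as y → ∞. Consequently, with φ = G⁻¹, the ratio φ(x)/(-φ'(x)) = φ(x)/(-f(φ(x))) tends to 0 as x → 0⁺. -/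
open MeasureTheory Set Filter Topology

/-!
Hardy's argument: for `g = 1 / (-f)`, which is nonnegative, antitone and integrable near `+∞`,
`(y / 2) * g y ≤ ∫ t in Ioc (y / 2) y, g t ≤ ∫ t in Ioi (y / 2), g t`, and tails of a convergent
integral tend to `0`. The statement about `φ` follows by composing with `φ x → ∞` as `x → 0⁺`.
-/

theorem tendsto_setIntegral_Ioi_atTop_zero {g : ℝ → ℝ} {a : ℝ} (hg : IntegrableOn g (Ioi a)) :
    Tendsto (fun x => ∫ t in Ioi x, g t) atTop (𝓝 0) := by
  have hempty : ⋂ x : ℝ, Ioi x = ∅ :=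
    eq_empty_of_forall_notMem fun t ht => lt_irrefl t (mem_iInter.1 ht t)
  simpa [hempty] using tendsto_setIntegral_of_antitone (fun _ => measurableSet_Ioi)
    (fun _ _ h => Ioi_subset_Ioi h) ⟨a, hg⟩

theorem AntitoneOn.sub_mul_le_setIntegral_Ioi {g : ℝ → ℝ} {a : ℝ} (hg : AntitoneOn g (Ioi a))
    (hg_nonneg : ∀ t ∈ Ioi a, 0 ≤ g t) (hint : IntegrableOn g (Ioi a)) {x y : ℝ} (hax : a < x)
    (hxy : x ≤ y) : (y - x) * g y ≤ ∫ t in Ioi x, g t := by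
  have hsub : Ioc x y ⊆ Ioi a := fun t ht => hax.trans ht.1
  calc (y - x) * g y ≤ ∫ t in Ioc x y, g t := by
        simpa [Real.volume_real_Ioc_of_le hxy, mul_comm] using
          setIntegral_ge_of_const_le_real measurableSet_Ioc measure_Ioc_lt_top.ne
            (fun t ht => hg (hsub ht) (hsub ⟨ht.1.trans_le ht.2, le_rfl⟩) ht.2)
            (hint.mono_set hsub)
    _ ≤ ∫ t in Ioi x, g t :=
        setIntegral_mono_set (hint.mono_set (Ioi_subset_Ioi hax.le))
          ((ae_restrict_iff' measurableSet_Ioi).2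
            (ae_of_all _ fun t ht => hg_nonneg t (hax.trans ht)))
          Ioc_subset_Ioi_self.eventuallyLE

theorem AntitoneOn.tendsto_mul_atTop_zero_of_integrableOn_Ioi {g : ℝ → ℝ} {a : ℝ}
    (hg : AntitoneOn g (Ioi a)) (hg_nonneg : ∀ t ∈ Ioi a, 0 ≤ g t) (hint : IntegrableOn g (Ioi a)) :
    Tendsto (fun y => y * g y) atTop (𝓝 0) := by
  have htail : Tendsto (fun y => 2 * ∫ t in Ioi (y / 2), g t) atTop (𝓝 0) := by
    simpa using ((tendsto_setIntegral_Ioi_atTop_zero hint).comp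
      (tendsto_id.atTop_div_const two_pos)).const_mul 2
  refine squeeze_zero' ?_ ?_ htail
  · filter_upwards [eventually_gt_atTop a, eventually_gt_atTop 0] with y hya hy0
    exact mul_nonneg hy0.le (hg_nonneg y hya)
  · filter_upwards [eventually_gt_atTop (2 * a), eventually_gt_atTop 0] with y hya hy0
    have := hg.sub_mul_le_setIntegral_Ioi hg_nonneg hint (x := y / 2) (y := y)
      (by linarith) (by linarith)
    linarith

theorem stmt10_general (f : ℝ → ℝ) (hf_anti : Antitone f)
    (hf_neg : ∀ y > 0, f y < 0)
    (hint : ∀ x > 0, IntegrableOn (fun t => 1 / (-f t)) (Ioi x))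
    (φ : ℝ → ℝ)
    (hφ_top : Tendsto φ (𝓝[>] 0) atTop) :
    Tendsto (fun y => y / (-f y)) atTop (𝓝 0) ∧
      Tendsto (fun x => φ x / (-f (φ x))) (𝓝[>] 0) (𝓝 0) := by
  have hpos : ∀ t ∈ Ioi (1 : ℝ), 0 < -f t := fun t ht => neg_pos.2 (hf_neg t (one_pos.trans ht))
  have hanti : AntitoneOn (fun t => 1 / -f t) (Ioi 1) := fun s hs t _ hst =>
    one_div_le_one_div_of_le (hpos s hs) (neg_le_neg (hf_anti hst))
  have hratio : Tendsto (fun y => y / (-f y)) atTop (𝓝 0) := by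
    simpa only [mul_one_div] using hanti.tendsto_mul_atTop_zero_of_integrableOn_Ioi
      (fun t ht => (one_div_pos.2 (hpos t ht)).le) (hint 1 one_pos)
  exact ⟨hratio, hratio.comp hφ_top⟩

theorem stmt10 (f : ℝ → ℝ) (hf_cont : Continuous f) (hf_anti : Antitone f)
    (hf0 : f 0 = 0) (hf_neg : ∀ y > 0, f y < 0)
    (hint : ∀ x > 0, IntegrableOn (fun t => 1 / (-f t)) (Ioi x))
    (G : ℝ → ℝ) (hG : ∀ x > 0, G x = ∫ t in Ioi x, 1 / (-f t))
    (φ : ℝ → ℝ) (hφ_pos : ∀ x > 0, 0 < φ x)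
    (hφ_inv : ∀ x > 0, G (φ x) = x)
    (hφ_top : Tendsto φ (𝓝[>] 0) atTop) :
    Tendsto (fun y => y / (-f y)) atTop (𝓝 0) ∧
      Tendsto (fun x => φ x / (-f (φ x))) (𝓝[>] 0) (𝓝 0) :=
  stmt10_general f hf_anti hf_neg hint φ hφ_top
end

section
/- Monotone comparison for the terminal-value ODE: Fix η* > 0, Λ ≥ 0, and let f be continuous, non-increasing, f ≤ 0 on [0,∞). Let ϑ : (0,∞) → (0,∞) solve ϑ'(s) = Λ + f(ϑ(s))/η* with ϑ(s) → +∞ as s → 0⁺. If u : [0, T) → ℝ is C¹ and satisfies u'(t) ≥ -Λ - f(u(t))/η* for all t, and u(t) ≤ ϑ(T - ε - t) for t near T - ε holds for every ε ∈ (0, T), then u(t) ≤ ϑ(T - t) for all t ∈ [0, T). -/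
/-! For `ε > 0` the shifted solution `s ↦ ϑ (T - ε - s)` solves the forward equation
`w' = -Λ - f w / η*`, whose right-hand side is non-decreasing in `w` because `f` is non-increasing.
Hence `u - w` cannot decrease while it is positive, so `u ≤ w` propagates backward in time from
points near `T - ε`, where it holds by assumption, down to every `t < T - ε`. Letting `ε → 0⁺`
gives `u t ≤ ϑ (T - t)` by continuity of `ϑ`. -/

open Set Filter Topology

theorem nonpos_left_of_deriv_nonneg_of_pos {g g' : ℝ → ℝ} {a b : ℝ} (hab : a ≤ b)
    (hg : ContinuousOn g (Icc a b)) (hg' : ∀ x ∈ Ioo a b, HasDerivAt g (g' x) x)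
    (hpos : ∀ x ∈ Ioo a b, 0 < g x → 0 ≤ g' x) (hb : g b ≤ 0) : g a ≤ 0 := by
  by_contra! ha
  -- `g` stays positive, hence non-decreasing, up to the first point of `[a, b]` where `g ≤ 0`.
  set S := Icc a b ∩ g ⁻¹' Iic 0
  have hS_ne : S.Nonempty := ⟨b, ⟨hab, le_rfl⟩, hb⟩
  have hS_bdd : BddBelow S := ⟨a, fun x hx => hx.1.1⟩
  have hs₀ : sInf S ∈ S :=
    (hg.preimage_isClosed_of_isClosed isClosed_Icc isClosed_Iic).csInf_mem hS_ne hS_bdd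
  have hs₀b : sInf S ≤ b := hs₀.1.2
  have hpos_before : ∀ x ∈ Ico a (sInf S), 0 < g x := fun x hx => by
    by_contra! hx0
    exact hx.2.not_ge (csInf_le hS_bdd ⟨⟨hx.1, hx.2.le.trans hs₀b⟩, hx0⟩)
  have hIoo : ∀ x ∈ Ioo a (sInf S), x ∈ Ioo a b := fun x hx => ⟨hx.1, hx.2.trans_le hs₀b⟩
  have hmono : MonotoneOn g (Icc a (sInf S)) := by
    refine monotoneOn_of_hasDerivWithinAt_nonneg (f' := g') (convex_Icc _ _)
      (hg.mono (Icc_subset_Icc_right hs₀b)) (fun x hx => ?_) (fun x hx => ?_)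
    · rw [interior_Icc] at hx ⊢
      exact (hg' x (hIoo x hx)).hasDerivWithinAt
    · rw [interior_Icc] at hx
      exact hpos x (hIoo x hx) (hpos_before x ⟨hx.1.le, hx.2⟩)
  have has₀ : a ≤ sInf S := hs₀.1.1
  have hgs₀ : g (sInf S) ≤ 0 := hs₀.2
  linarith [hmono ⟨le_rfl, has₀⟩ ⟨has₀, le_rfl⟩ has₀]

theorem le_left_of_le_right_of_deriv_le {F u w u' w' : ℝ → ℝ} (hF : Monotone F) {a b : ℝ}
    (hab : a ≤ b) (hu : ∀ x ∈ Icc a b, HasDerivAt u (u' x) x)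
    (hw : ∀ x ∈ Icc a b, HasDerivAt w (w' x) x) (hu' : ∀ x ∈ Ioo a b, F (u x) ≤ u' x)
    (hw' : ∀ x ∈ Ioo a b, w' x ≤ F (w x)) (hb : u b ≤ w b) : u a ≤ w a := by
  have hg : ∀ x ∈ Icc a b, HasDerivAt (fun x => u x - w x) (u' x - w' x) x :=
    fun x hx => (hu x hx).sub (hw x hx)
  have hg_nonpos := nonpos_left_of_deriv_nonneg_of_pos hab
    (fun x hx => (hg x hx).continuousAt.continuousWithinAt)
    (fun x hx => hg x (Ioo_subset_Icc_self hx))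
    (fun x hx hpos => by linarith [hu' x hx, hw' x hx, hF (show w x ≤ u x by linarith)])
    (by linarith)
  linarith

theorem stmt17_general (f ϑ u : ℝ → ℝ) (ηs Λ T : ℝ)
    (hη : 0 < ηs)
    (hf_anti : Antitone f)
    (hϑ_ode : ∀ s > 0, HasDerivAt ϑ (Λ + f (ϑ s) / ηs) s)
    (hu_diff : ∀ t ∈ Ico (0:ℝ) T, DifferentiableAt ℝ u t)
    (hu_sub : ∀ t ∈ Ico (0:ℝ) T, deriv u t ≥ -Λ - f (u t) / ηs)
    (hu_near : ∀ ε : ℝ, 0 < ε → ε < T →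
        ∀ᶠ t in 𝓝[<] (T - ε), u t ≤ ϑ (T - ε - t)) :
    ∀ t ∈ Ico (0:ℝ) T, u t ≤ ϑ (T - t) := by
  rintro t ⟨ht0, htT⟩
  have hF : Monotone fun y => -Λ - f y / ηs := fun x y hxy => by
    linarith [div_le_div_of_nonneg_right (hf_anti hxy) hη.le]
  have hshift : ∀ ε ∈ Ioo 0 (T - t), u t ≤ ϑ (T - ε - t) := by
    rintro ε ⟨hε, hεt⟩
    obtain ⟨s, hs_le, hs⟩ :=
      ((hu_near ε hε (by linarith)).and (Ioo_mem_nhdsLT (by linarith : t < T - ε))).exists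
    have hIcc : ∀ x ∈ Icc t s, x ∈ Ico 0 T ∧ 0 < T - ε - x :=
      fun x hx => ⟨⟨ht0.trans hx.1, by linarith [hx.2, hs.2]⟩, by linarith [hx.2, hs.2]⟩
    exact le_left_of_le_right_of_deriv_le hF hs.1.le
      (fun x hx => (hu_diff x (hIcc x hx).1).hasDerivAt)
      (fun x hx => (hϑ_ode _ (hIcc x hx).2).comp_const_sub (T - ε) x)
      (fun x hx => hu_sub x (hIcc x (Ioo_subset_Icc_self hx)).1) (fun x _ => by linarith) hs_le
  have hlim : Tendsto (fun ε => ϑ (T - ε - t)) (𝓝[>] 0) (𝓝 (ϑ (T - t))) := by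
    refine ((hϑ_ode (T - t) (by linarith)).continuousAt.tendsto.comp ?_)
    exact (Continuous.tendsto' (by fun_prop) 0 (T - t) (by ring)).mono_left nhdsWithin_le_nhds
  exact ge_of_tendsto hlim (eventually_of_mem (Ioo_mem_nhdsGT (by linarith)) hshift)

theorem stmt17 (f ϑ u : ℝ → ℝ) (ηs Λ T : ℝ)
    (hη : 0 < ηs) (hΛ : 0 ≤ Λ) (hT : 0 < T)
    (hf_cont : Continuous f) (hf_anti : Antitone f) (hf_np : ∀ y ≥ (0:ℝ), f y ≤ 0)
    (hϑ_pos : ∀ s > 0, 0 < ϑ s)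
    (hϑ_ode : ∀ s > 0, HasDerivAt ϑ (Λ + f (ϑ s) / ηs) s)
    (hϑ_top : Tendsto ϑ (𝓝[>] 0) atTop)
    (hu_diff : ∀ t ∈ Ico (0:ℝ) T, DifferentiableAt ℝ u t)
    (hu_sub : ∀ t ∈ Ico (0:ℝ) T, deriv u t ≥ -Λ - f (u t) / ηs)
    (hu_near : ∀ ε : ℝ, 0 < ε → ε < T →
        ∀ᶠ t in 𝓝[<] (T - ε), u t ≤ ϑ (T - ε - t)) :
    ∀ t ∈ Ico (0:ℝ) T, u t ≤ ϑ (T - t) :=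
  stmt17_general f ϑ u ηs Λ T hη hf_anti hϑ_ode hu_diff hu_sub hu_near
end
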